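/- arXiv:2002.01590 — 4 statements merged into one kernel-verified Lean document; each statement's English description precedes it below -/
import Mathlib

section
/- The quantum statistical complexity measure is sub-additive over copies: for every N×N density matrix ρ (N ≥ 2) and every n ≥ 1, C(ρ^⊗n) ≤ n·C(ρ), where ρ^⊗n denotes the n-fold Kronecker (tensor) product of ρ with itself, an N^n × N^n density matrix. -/
open Matrix BigOperators Kronecker ComplexOrder

noncomputable def vNEntropy {m : Type*} [Fintype m] [DecidableEq m]
    (ρ : Matrix m m ℂ) : ℝ :=
  if h : ρ.IsHermitian then -∑ i, h.eigenvalues i * Real.log (h.eigenvalues i) else 0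

noncomputable def traceNorm {m : Type*} [Fintype m] [DecidableEq m]
    (A : Matrix m m ℂ) : ℝ :=
  if h : A.IsHermitian then ∑ i, |h.eigenvalues i| else 0

noncomputable def mmix (m : Type*) [Fintype m] [DecidableEq m] : Matrix m m ℂ :=
  ((Fintype.card m : ℂ))⁻¹ • 1

noncomputable def diseq {m : Type*} [Fintype m] [DecidableEq m]
    (ρ : Matrix m m ℂ) : ℝ := (1/2) * traceNorm (ρ - mmix m)

noncomputable def qscm {m : Type*} [Fintype m] [DecidableEq m]
    (ρ : Matrix m m ℂ) : ℝ :=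
  vNEntropy ρ * diseq ρ / Real.log (Fintype.card m)

noncomputable def kronPow {N : ℕ} (ρ : Matrix (Fin N) (Fin N) ℂ) (n : ℕ) :
    Matrix (Fin n → Fin N) (Fin n → Fin N) ℂ :=
  fun x y => ∏ i, ρ (x i) (y i)

/-!
Diagonalise `ρ = U diag(p) U*` with `U` unitary. Then `ρ^⊗n = U^⊗n diag(p^⊗n) (U^⊗n)*`, so the
eigenvalues of `ρ^⊗n` and of `ρ^⊗n - I/N^n` are `∏ p(xᵢ)` and `∏ p(xᵢ) - ∏ N⁻¹`. The entropy of a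
product distribution is additive, `S(ρ^⊗n) = n S(ρ)`, and `log N^n = n log N`, so it remains to show
`D(ρ^⊗n) ≤ n D(ρ)`. This follows by induction from `p⊗q - u⊗v = p⊗(q - v) + (p - u)⊗v`, which
bounds the ℓ¹ distance of product distributions by the sum of the distances of the factors.
-/

open Finset Real Polynomial

section ProductDistributions

variable {α β : Type*} [Fintype α] [Fintype β]

theorem sum_negMulLog_mul_eq {p : α → ℝ} {q : β → ℝ} (hp : ∑ a, p a = 1) (hq : ∑ b, q b = 1) :
    ∑ a, ∑ b, negMulLog (p a * q b) = ∑ a, negMulLog (p a) + ∑ b, negMulLog (q b) := by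
  simp only [negMulLog_mul, sum_add_distrib, ← sum_mul, ← mul_sum, hp, hq, one_mul]

theorem sum_abs_mul_sub_mul_le {p u : α → ℝ} {q v : β → ℝ} (hp0 : ∀ a, 0 ≤ p a)
    (hp1 : ∑ a, p a = 1) (hv0 : ∀ b, 0 ≤ v b) (hv1 : ∑ b, v b = 1) :
    ∑ a, ∑ b, |p a * q b - u a * v b| ≤ ∑ a, |p a - u a| + ∑ b, |q b - v b| := by
  have hsplit : ∀ a b, |p a * q b - u a * v b| ≤ p a * |q b - v b| + |p a - u a| * v b := by
    intro a b
    calc |p a * q b - u a * v b| = |p a * (q b - v b) + (p a - u a) * v b| := by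
          congr 1; ring
      _ ≤ p a * |q b - v b| + |p a - u a| * v b := by
        grw [abs_add_le, abs_mul, abs_mul, abs_of_nonneg (hp0 a), abs_of_nonneg (hv0 b)]
  calc ∑ a, ∑ b, |p a * q b - u a * v b| ≤ ∑ a, ∑ b, (p a * |q b - v b| + |p a - u a| * v b) :=
        sum_le_sum fun a _ => sum_le_sum fun b _ => hsplit a b
    _ = ∑ a, |p a - u a| + ∑ b, |q b - v b| := by
        simp only [sum_add_distrib, ← mul_sum, ← sum_mul, hp1, hv1, one_mul, mul_one]
        ring

theorem sum_negMulLog_nonneg {p : α → ℝ} (hp0 : ∀ a, 0 ≤ p a) (hp1 : ∑ a, p a = 1) :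
    0 ≤ ∑ a, negMulLog (p a) :=
  sum_nonneg fun a _ =>
    negMulLog_nonneg (hp0 a) (hp1 ▸ single_le_sum (fun b _ => hp0 b) (mem_univ a))

end ProductDistributions

section PowerDistributions

variable {α : Type*} [Fintype α] {M : Type*} [AddCommMonoid M]

theorem Fin.sum_univ_pi_succ {n : ℕ} (f : (Fin (n + 1) → α) → M) :
    ∑ x, f x = ∑ a, ∑ y : Fin n → α, f (Fin.cons a y) := by
  rw [← Fintype.sum_prod_type', ← (Fin.consEquiv fun _ => α).sum_comp]
  rfl

theorem sum_prod_apply_eq_pow (p : α → ℝ) (n : ℕ) :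
    ∑ x : Fin n → α, ∏ i, p (x i) = (∑ a, p a) ^ n := by
  rw [← Fintype.prod_sum (fun _ => p), prod_const, card_univ, Fintype.card_fin]

theorem sum_negMulLog_prod_apply {p : α → ℝ} (hp : ∑ a, p a = 1) (n : ℕ) :
    ∑ x : Fin n → α, negMulLog (∏ i, p (x i)) = n * ∑ a, negMulLog (p a) := by
  induction n with
  | zero => simp
  | succ n ih =>
    simp only [Fin.sum_univ_pi_succ, Fin.prod_univ_succ, Fin.cons_zero, Fin.cons_succ]
    rw [sum_negMulLog_mul_eq hp (by rw [sum_prod_apply_eq_pow, hp, one_pow]), ih]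
    push_cast
    ring

theorem sum_abs_prod_apply_sub_le {p u : α → ℝ} (hp0 : ∀ a, 0 ≤ p a) (hp1 : ∑ a, p a = 1)
    (hu0 : ∀ a, 0 ≤ u a) (hu1 : ∑ a, u a = 1) (n : ℕ) :
    ∑ x : Fin n → α, |∏ i, p (x i) - ∏ i, u (x i)| ≤ n * ∑ a, |p a - u a| := by
  induction n with
  | zero => simp
  | succ n ih =>
    simp only [Fin.sum_univ_pi_succ, Fin.prod_univ_succ, Fin.cons_zero, Fin.cons_succ]
    grw [sum_abs_mul_sub_mul_le hp0 hp1 (fun y : Fin n → α => prod_nonneg fun i _ => hu0 (y i))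
      (by rw [sum_prod_apply_eq_pow, hu1, one_pow]), ih]
    push_cast
    linarith

end PowerDistributions

section KronPow

variable {N : ℕ}

theorem kronPow_mul (A B : Matrix (Fin N) (Fin N) ℂ) (n : ℕ) :
    kronPow A n * kronPow B n = kronPow (A * B) n := by
  ext x y
  simp only [kronPow, mul_apply, Fintype.prod_sum, prod_mul_distrib]

theorem kronPow_one (n : ℕ) : kronPow (1 : Matrix (Fin N) (Fin N) ℂ) n = 1 := by
  ext x y
  simp [kronPow, one_apply, prod_boole, funext_iff]

theorem star_kronPow (A : Matrix (Fin N) (Fin N) ℂ) (n : ℕ) :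
    star (kronPow A n) = kronPow (star A) n := by
  ext x y
  simp [kronPow]

theorem kronPow_diagonal (d : Fin N → ℂ) (n : ℕ) :
    kronPow (diagonal d) n = diagonal fun x => ∏ i, d (x i) := by
  ext x y
  rcases eq_or_ne x y with rfl | hxy
  · simp [kronPow]
  · obtain ⟨i, hi⟩ := Function.ne_iff.mp hxy
    rw [diagonal_apply_ne _ hxy]
    exact prod_eq_zero (mem_univ i) (diagonal_apply_ne _ hi)

theorem kronPow_mem_unitaryGroup {U : Matrix (Fin N) (Fin N) ℂ} (hU : U ∈ unitaryGroup (Fin N) ℂ)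
    (n : ℕ) : kronPow U n ∈ unitaryGroup (Fin n → Fin N) ℂ := by
  rw [mem_unitaryGroup_iff, star_kronPow, kronPow_mul, mem_unitaryGroup_iff.mp hU, kronPow_one]

end KronPow

namespace Matrix

variable {m : Type*} [Fintype m] [DecidableEq m]

def HasSpectralDecomposition (A : Matrix m m ℂ) (d : m → ℝ) : Prop :=
  ∃ U ∈ unitaryGroup m ℂ, A = U * diagonal (fun i => (d i : ℂ)) * star U

theorem IsHermitian.map_eigenvalues_eq_of_charpoly_eq {A : Matrix m m ℂ} (hA : A.IsHermitian)
    {d : m → ℝ} (h : A.charpoly = ∏ i, (X - C (d i : ℂ))) :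
    univ.val.map hA.eigenvalues = univ.val.map d := by
  apply Multiset.map_injective Complex.ofReal_injective
  rw [Multiset.map_map, Multiset.map_map]
  refine hA.roots_charpoly_eq_eigenvalues.symm.trans ?_
  rw [h, roots_prod _ _ (prod_ne_zero_iff.mpr fun i _ => X_sub_C_ne_zero _)]
  simp only [roots_X_sub_C, Multiset.bind_singleton]
  rfl

theorem IsHermitian.sum_eigenvalues_eq_of_charpoly_eq {A : Matrix m m ℂ} (hA : A.IsHermitian)
    {d : m → ℝ} (h : A.charpoly = ∏ i, (X - C (d i : ℂ))) (g : ℝ → ℝ) :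
    ∑ i, g (hA.eigenvalues i) = ∑ i, g (d i) := by
  have := congrArg (fun s => (s.map g).sum) (hA.map_eigenvalues_eq_of_charpoly_eq h)
  simp only [Multiset.map_map] at this
  exact this

theorem IsHermitian.hasSpectralDecomposition {A : Matrix m m ℂ} (hA : A.IsHermitian) :
    A.HasSpectralDecomposition hA.eigenvalues :=
  ⟨_, hA.eigenvectorUnitary.2, hA.spectral_theorem⟩

namespace HasSpectralDecomposition

variable {A : Matrix m m ℂ} {d : m → ℝ}

theorem isHermitian (h : A.HasSpectralDecomposition d) : A.IsHermitian := by
  obtain ⟨U, -, rfl⟩ := h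
  simp [IsHermitian, star_eq_conjTranspose, conjTranspose_mul, mul_assoc, Pi.star_def]

theorem charpoly_eq (h : A.HasSpectralDecomposition d) :
    A.charpoly = ∏ i, (X - C (d i : ℂ)) := by
  obtain ⟨U, hU, rfl⟩ := h
  rw [charpoly_mul_comm, ← mul_assoc, Unitary.star_mul_self_of_mem hU, one_mul,
    charpoly_diagonal]

theorem sub_smul_one (h : A.HasSpectralDecomposition d) (c : ℝ) :
    (A - (c : ℂ) • 1).HasSpectralDecomposition fun i => d i - c := by
  obtain ⟨U, hU, rfl⟩ := h
  refine ⟨U, hU, ?_⟩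
  have hc : (c : ℂ) • (1 : Matrix m m ℂ) = U * diagonal (fun _ => (c : ℂ)) * star U := by
    simp [← smul_one_eq_diagonal, Unitary.mul_star_self_of_mem hU]
  rw [hc, ← sub_mul, ← mul_sub, diagonal_sub]
  push_cast
  rfl

theorem kronPow {N : ℕ} {ρ : Matrix (Fin N) (Fin N) ℂ} {d : Fin N → ℝ}
    (h : ρ.HasSpectralDecomposition d) (n : ℕ) :
    (_root_.kronPow ρ n).HasSpectralDecomposition fun x => ∏ i, d (x i) := by
  obtain ⟨U, hU, rfl⟩ := h
  refine ⟨_root_.kronPow U n, kronPow_mem_unitaryGroup hU n, ?_⟩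
  rw [← kronPow_mul, ← kronPow_mul, kronPow_diagonal, star_kronPow]
  push_cast
  rfl

theorem vNEntropy_eq (h : A.HasSpectralDecomposition d) :
    vNEntropy A = ∑ i, negMulLog (d i) := by
  rw [vNEntropy, dif_pos h.isHermitian, ← sum_neg_distrib,
    h.isHermitian.sum_eigenvalues_eq_of_charpoly_eq h.charpoly_eq fun t => -(t * log t)]
  simp only [negMulLog, neg_mul]

theorem diseq_eq (h : A.HasSpectralDecomposition d) :
    diseq A = 1 / 2 * ∑ i, |d i - (Fintype.card m : ℝ)⁻¹| := by
  have hsub := h.sub_smul_one (Fintype.card m : ℝ)⁻¹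
  push_cast at hsub
  rw [diseq, traceNorm, mmix, dif_pos hsub.isHermitian,
    hsub.isHermitian.sum_eigenvalues_eq_of_charpoly_eq hsub.charpoly_eq]

end HasSpectralDecomposition

end Matrix

theorem qscm_subadditive_copies_general {N : ℕ}
    (ρ : Matrix (Fin N) (Fin N) ℂ) (hρ : ρ.PosSemidef) (htr : ρ.trace = 1)
    (n : ℕ) :
    qscm (kronPow ρ n) ≤ (n : ℝ) * qscm ρ := by
  set p := hρ.isHermitian.eigenvalues
  have hdec : ρ.HasSpectralDecomposition p := hρ.isHermitian.hasSpectralDecomposition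
  have hp0 : ∀ i, 0 ≤ p i := hρ.eigenvalues_nonneg
  have hp1 : ∑ i, p i = 1 := by
    have := congrArg Complex.re (hρ.isHermitian.trace_eq_sum_eigenvalues.symm.trans htr)
    simpa using this
  have hN : (N : ℝ) ≠ 0 := Nat.cast_ne_zero.mpr (by rintro rfl; simp at hp1)
  have hT := sum_abs_prod_apply_sub_le hp0 hp1 (u := fun _ => (N : ℝ)⁻¹) (fun _ => by positivity)
    (by simp [hN]) n
  have hcard : ((Fintype.card (Fin n → Fin N) : ℝ))⁻¹ = ∏ _i : Fin n, (N : ℝ)⁻¹ := by simp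
  rw [qscm, qscm, (hdec.kronPow n).vNEntropy_eq, (hdec.kronPow n).diseq_eq, hdec.vNEntropy_eq,
    hdec.diseq_eq, sum_negMulLog_prod_apply hp1, hcard, Fintype.card_fun, Fintype.card_fin,
    Fintype.card_fin, Nat.cast_pow, log_pow]
  rcases eq_or_ne n 0 with rfl | hn
  · simp -- both sides vanish, the left one because `log 1 = 0` and `x / 0 = 0`
  rw [mul_assoc, mul_div_mul_left _ _ (Nat.cast_ne_zero.mpr hn), ← mul_div_assoc]
  gcongr ?_ / _
  nlinarith [mul_le_mul_of_nonneg_left hT (sum_negMulLog_nonneg hp0 hp1)]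

/-- QSCM is sub-additive over copies. -/
theorem qscm_subadditive_copies {N : ℕ} (hN : 2 ≤ N)
    (ρ : Matrix (Fin N) (Fin N) ℂ) (hρ : ρ.PosSemidef) (htr : ρ.trace = 1)
    (n : ℕ) (hn : 1 ≤ n) :
    qscm (kronPow ρ n) ≤ (n : ℝ) * qscm ρ :=
  qscm_subadditive_copies_general ρ hρ htr n
end

section
/- Extension by a maximally mixed state: for every N×N density matrix ρ (N ≥ 2), the quantum statistical complexity of the N²×N² density matrix ρ ⊗ (I/N) satisfies C(ρ ⊗ (I/N)) = (S(ρ) + log N)/(2 log N) · D(ρ, I/N) = C(ρ)/2 + D(ρ, I/N)/2. -/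
open Matrix BigOperators Kronecker ComplexOrder

/-! If `ρ = U diag(λ) U*`, then `ρ ⊗ (I/N) = (U ⊗ 1) diag(λᵢ/N) (U ⊗ 1)*`, so the spectrum of
`ρ ⊗ (I/N)` is that of `ρ` scaled by `1/N`, each eigenvalue repeated `N` times. Hence the entropy
grows by exactly `log N` (using `∑ λᵢ = 1`), while `ρ ⊗ (I/N) - I/N² = (ρ - I/N) ⊗ (I/N)` has the
same trace norm as `ρ - I/N`. The normalisation `log (N²) = 2 log N` gives the factor `1/2`. -/

open Polynomial

lemma charpoly_unitary_conj {m : Type*} [Fintype m] [DecidableEq m] {U : Matrix m m ℂ}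
    (hU : star U * U = 1) (D : Matrix m m ℂ) : (U * D * star U).charpoly = D.charpoly := by
  rw [charpoly_mul_comm, ← mul_assoc, hU, one_mul]

lemma Matrix.IsHermitian.sum_eigenvalues_eq_of_charpoly {m ι : Type*} [Fintype m] [DecidableEq m]
    [Fintype ι] {A : Matrix m m ℂ} (hA : A.IsHermitian) {c : ι → ℝ}
    (h : A.charpoly = ∏ j, (X - C (c j : ℂ))) (g : ℝ → ℝ) :
    ∑ i, g (hA.eigenvalues i) = ∑ j, g (c j) := by
  have hroots : Multiset.map (RCLike.ofReal ∘ hA.eigenvalues) Finset.univ.val =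
      Multiset.map (fun j => (c j : ℂ)) Finset.univ.val := by
    rw [← hA.roots_charpoly_eq_eigenvalues, h, roots_prod _ _ (by simp [Finset.prod_ne_zero_iff,
      X_sub_C_ne_zero])]
    simp
  have := congrArg (fun s => (s.map fun z : ℂ => g z.re).sum) hroots
  simp only [Multiset.map_map] at this
  rw [Finset.sum_eq_multiset_sum, Finset.sum_eq_multiset_sum]
  exact this

lemma Matrix.IsHermitian.kronecker {m n : Type*} {A : Matrix m m ℂ} {B : Matrix n n ℂ}
    (hA : A.IsHermitian) (hB : B.IsHermitian) : (A ⊗ₖ B).IsHermitian := by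
  rw [IsHermitian, conjTranspose_kronecker, hA.eq, hB.eq]

lemma isHermitian_real_smul_one {n : Type*} [DecidableEq n] (c : ℝ) :
    ((c : ℂ) • (1 : Matrix n n ℂ)).IsHermitian :=
  isHermitian_one.smul (by simp [IsSelfAdjoint])

lemma Matrix.IsHermitian.charpoly_kronecker_smul_one {m n : Type*} [Fintype m] [DecidableEq m]
    [Fintype n] [DecidableEq n] {A : Matrix m m ℂ} (hA : A.IsHermitian) (c : ℝ) :
    (A ⊗ₖ ((c : ℂ) • (1 : Matrix n n ℂ))).charpoly =
      ∏ p : m × n, (X - C ((hA.eigenvalues p.1 * c : ℝ) : ℂ)) := by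
  set U : Matrix m m ℂ := (hA.eigenvectorUnitary : Matrix m m ℂ)
  have hU : star U * U = 1 := Matrix.mem_unitaryGroup_iff'.mp hA.eigenvectorUnitary.2
  have hstar : star (U ⊗ₖ (1 : Matrix n n ℂ)) = star U ⊗ₖ 1 := by
    rw [star_eq_conjTranspose, conjTranspose_kronecker, conjTranspose_one, star_eq_conjTranspose]
  have hconj : A ⊗ₖ ((c : ℂ) • (1 : Matrix n n ℂ)) = (U ⊗ₖ 1) *
      diagonal (fun p : m × n => ((hA.eigenvalues p.1 * c : ℝ) : ℂ)) * star (U ⊗ₖ 1) := by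
    have hdiag : diagonal (fun p : m × n => ((hA.eigenvalues p.1 * c : ℝ) : ℂ)) =
        diagonal (RCLike.ofReal ∘ hA.eigenvalues) ⊗ₖ ((c : ℂ) • (1 : Matrix n n ℂ)) := by
      rw [smul_one_eq_diagonal, diagonal_kronecker_diagonal]
      simp
    conv_lhs => rw [hA.spectral_theorem, Unitary.conjStarAlgAut_apply]
    rw [hdiag, hstar, ← mul_kronecker_mul, ← mul_kronecker_mul, one_mul, mul_one]
  have hUU : star (U ⊗ₖ (1 : Matrix n n ℂ)) * (U ⊗ₖ 1) = 1 := by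
    rw [hstar, ← mul_kronecker_mul, hU, one_mul, one_kronecker_one]
  rw [hconj, charpoly_unitary_conj hUU, charpoly_diagonal]

lemma Matrix.IsHermitian.sum_eigenvalues_kronecker_smul_one {m n : Type*} [Fintype m]
    [DecidableEq m] [Fintype n] [DecidableEq n] {A : Matrix m m ℂ} (hA : A.IsHermitian) (c : ℝ)
    (hAc : (A ⊗ₖ ((c : ℂ) • (1 : Matrix n n ℂ))).IsHermitian) (g : ℝ → ℝ) :
    ∑ j, g (hAc.eigenvalues j) = Fintype.card n * ∑ i, g (hA.eigenvalues i * c) := by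
  rw [hAc.sum_eigenvalues_eq_of_charpoly (hA.charpoly_kronecker_smul_one c), Fintype.sum_prod_type]
  simp only [Finset.sum_const, Finset.card_univ, nsmul_eq_mul, Finset.mul_sum]

lemma mmix_eq_real_smul_one (n : Type*) [Fintype n] [DecidableEq n] :
    mmix n = (((Fintype.card n : ℝ)⁻¹ : ℝ) : ℂ) • (1 : Matrix n n ℂ) := by
  rw [mmix, Complex.ofReal_inv, Complex.ofReal_natCast]

lemma isHermitian_mmix (n : Type*) [Fintype n] [DecidableEq n] : (mmix n).IsHermitian := by
  rw [mmix_eq_real_smul_one]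
  exact isHermitian_real_smul_one _

lemma mmix_prod (m n : Type*) [Fintype m] [DecidableEq m] [Fintype n] [DecidableEq n] :
    mmix (m × n) = mmix m ⊗ₖ mmix n := by
  rw [mmix, mmix, mmix, smul_kronecker, kronecker_smul, one_kronecker_one, smul_smul,
    Fintype.card_prod, Nat.cast_mul, mul_inv, mul_comm]

lemma mul_log_mul_eq_of_right_ne_zero (x : ℝ) {y : ℝ} (hy : y ≠ 0) :
    x * y * Real.log (x * y) = y * (x * Real.log x) + x * y * Real.log y := by
  rcases eq_or_ne x 0 with rfl | hx
  · simp
  · rw [Real.log_mul hx hy]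
    ring

lemma vNEntropy_kronecker_mmix {m n : Type*} [Fintype m] [DecidableEq m] [Fintype n]
    [DecidableEq n] [Nonempty n] {ρ : Matrix m m ℂ} (hρ : ρ.IsHermitian) (htr : ρ.trace = 1) :
    vNEntropy (ρ ⊗ₖ mmix n) = vNEntropy ρ + Real.log (Fintype.card n) := by
  have hn : (Fintype.card n : ℝ) ≠ 0 := by positivity
  have hsum : ∑ i, hρ.eigenvalues i = 1 := by
    simpa [htr] using congrArg Complex.re hρ.trace_eq_sum_eigenvalues.symm
  have hσ := hρ.kronecker (isHermitian_real_smul_one (n := n) (Fintype.card n : ℝ)⁻¹)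
  rw [mmix_eq_real_smul_one, vNEntropy, dif_pos hσ, vNEntropy, dif_pos hρ,
    hρ.sum_eigenvalues_kronecker_smul_one _ hσ (fun x => x * Real.log x)]
  simp only [mul_log_mul_eq_of_right_ne_zero _ (inv_ne_zero hn), Finset.sum_add_distrib,
    ← Finset.mul_sum, ← Finset.sum_mul, hsum, Real.log_inv]
  field_simp
  ring

lemma traceNorm_kronecker_smul_one {m n : Type*} [Fintype m] [DecidableEq m] [Fintype n]
    [DecidableEq n] {B : Matrix m m ℂ} (hB : B.IsHermitian) (c : ℝ) :
    traceNorm (B ⊗ₖ ((c : ℂ) • (1 : Matrix n n ℂ))) = Fintype.card n * |c| * traceNorm B := by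
  have hBc := hB.kronecker (isHermitian_real_smul_one (n := n) c)
  rw [traceNorm, dif_pos hBc, traceNorm, dif_pos hB,
    hB.sum_eigenvalues_kronecker_smul_one c hBc (fun x => |x|)]
  simp only [abs_mul, ← Finset.sum_mul]
  ring

lemma diseq_kronecker_mmix {m n : Type*} [Fintype m] [DecidableEq m] [Fintype n]
    [DecidableEq n] [Nonempty n] {ρ : Matrix m m ℂ} (hρ : ρ.IsHermitian) :
    diseq (ρ ⊗ₖ mmix n) = diseq ρ := by
  have hn : (0 : ℝ) < Fintype.card n := by positivity
  have hsub : ρ ⊗ₖ mmix n - mmix (m × n) = (ρ - mmix m) ⊗ₖ mmix n := by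
    rw [mmix_prod]
    ext ⟨i, k⟩ ⟨j, l⟩
    simp [sub_mul]
  rw [diseq, diseq, hsub, mmix_eq_real_smul_one n,
    traceNorm_kronecker_smul_one (hρ.sub (isHermitian_mmix m)), abs_inv, abs_of_pos hn,
    mul_inv_cancel₀ hn.ne', one_mul]

lemma qscm_kronecker_mmix {m n : Type*} [Fintype m] [DecidableEq m] [Fintype n]
    [DecidableEq n] [Nonempty n] {ρ : Matrix m m ℂ} (hρ : ρ.IsHermitian) (htr : ρ.trace = 1) :
    qscm (ρ ⊗ₖ mmix n) = (vNEntropy ρ + Real.log (Fintype.card n)) * diseq ρ /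
      Real.log (Fintype.card m * Fintype.card n) := by
  rw [qscm, vNEntropy_kronecker_mmix hρ htr, diseq_kronecker_mmix hρ, Fintype.card_prod,
    Nat.cast_mul]

/-- extension by a maximally mixed state. -/
theorem qscm_extension_mmix {N : ℕ} (hN : 2 ≤ N)
    (ρ : Matrix (Fin N) (Fin N) ℂ) (hρ : ρ.PosSemidef) (htr : ρ.trace = 1) :
    qscm (ρ ⊗ₖ mmix (Fin N)) = (vNEntropy ρ + Real.log N) / (2 * Real.log N) * diseq ρ ∧
    qscm (ρ ⊗ₖ mmix (Fin N)) = qscm ρ / 2 + diseq ρ / 2 := by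
  have : Nonempty (Fin N) := ⟨⟨0, by omega⟩⟩
  have hN₀ : (N : ℝ) ≠ 0 := by positivity
  have hlog : Real.log N ≠ 0 := (Real.log_pos (by exact_mod_cast hN)).ne'
  have hq : qscm (ρ ⊗ₖ mmix (Fin N)) =
      (vNEntropy ρ + Real.log N) * diseq ρ / (2 * Real.log N) := by
    rw [qscm_kronecker_mmix hρ.isHermitian htr, Fintype.card_fin, Real.log_mul hN₀ hN₀, two_mul]
  refine ⟨by rw [hq]; ring, ?_⟩
  rw [hq, qscm, Fintype.card_fin]
  field_simp
end

section
/- Extension by a pure state: for every N×N density matrix ρ (N ≥ 2) and every unit vector ψ ∈ ℂᴺ, the quantum statistical complexity of the N²×N² density matrix ρ ⊗ |ψ⟩⟨ψ| satisfies C(ρ ⊗ |ψ⟩⟨ψ|) ≤ (S(ρ)/(2 log N)) · ( D(ρ, I/N) + (N−1)/N ). -/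
open Matrix BigOperators Kronecker ComplexOrder

/-!
The spectrum of `A ⊗ B` consists of the products `λᵢ μₖ` of the spectra. A pure state has rank one
and trace one, so its spectrum is `(1, 0, …, 0)`, and the spectrum of `ρ ⊗ |ψ⟩⟨ψ|` is that of `ρ`
padded with `N² - N` zeros; this leaves the entropy unchanged. In the trace norm of
`ρ ⊗ |ψ⟩⟨ψ| - I/N²`, comparing each `λᵢ` with `1/N²` instead of `1/N` costs at most
`N (1/N - 1/N²) = (N - 1)/N`, and the padding zeros contribute `N (N - 1) / N² = (N - 1)/N` more.
Hence `D(ρ ⊗ |ψ⟩⟨ψ|) ≤ D(ρ) + (N - 1)/N`, and `log N² = 2 log N`.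
-/

open Polynomial

theorem Fintype.sum_comp_pi_single {ι M : Type*} [Fintype ι] [DecidableEq ι] [Zero M]
    (g : M → ℝ) (j : ι) (a : M) :
    ∑ i, g ((Pi.single j a : ι → M) i) = g a + ((Fintype.card ι : ℝ) - 1) * g 0 := by
  have hcompl : ∀ i ∈ ({j}ᶜ : Finset ι), g ((Pi.single j a : ι → M) i) = g 0 := fun i hi => by
    rw [Pi.single_eq_of_ne (by simpa using hi)]
  rw [Fintype.sum_eq_add_sum_compl j, Pi.single_eq_same, Finset.sum_congr rfl hcompl,
    Finset.sum_const, Finset.card_compl, Finset.card_singleton, nsmul_eq_mul,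
    Nat.cast_sub (Fintype.card_pos_iff.mpr ⟨j⟩), Nat.cast_one]

namespace Matrix

theorem IsHermitian.kronecker_s10 {𝕜 m n : Type*} [CommRing 𝕜] [StarRing 𝕜] {A : Matrix m m 𝕜}
    {B : Matrix n n 𝕜} (hA : A.IsHermitian) (hB : B.IsHermitian) : (A ⊗ₖ B).IsHermitian := by
  rw [IsHermitian, conjTranspose_kronecker, hA.eq, hB.eq]

theorem charpoly_sub_smul_one_of_charpoly_eq {R n : Type*} [CommRing R] [Fintype n] [DecidableEq n]
    {A : Matrix n n R} {d : n → R} (h : A.charpoly = ∏ i, (X - C (d i))) (c : R) :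
    (A - c • 1).charpoly = ∏ i, (X - C (d i - c)) := by
  rw [smul_one_eq_diagonal, ← scalar_apply, charpoly_sub_scalar, h, Polynomial.prod_comp]
  simp [sub_sub_eq_add_sub, add_sub_assoc]

variable {𝕜 : Type*} [RCLike 𝕜] {m n : Type*} [Fintype m] [DecidableEq m] [Fintype n]
  [DecidableEq n]

theorem IsHermitian.sum_comp_eigenvalues_of_charpoly_eq {A : Matrix n n 𝕜} (hA : A.IsHermitian)
    {d : n → ℝ} (h : A.charpoly = ∏ i, (X - C (d i : 𝕜))) (f : ℝ → ℝ) :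
    ∑ i, f (hA.eigenvalues i) = ∑ i, f (d i) := by
  have hroots : Finset.univ.val.map (RCLike.ofReal ∘ hA.eigenvalues) =
      Finset.univ.val.map (RCLike.ofReal ∘ d : n → 𝕜) := by
    rw [← hA.roots_charpoly_eq_eigenvalues, h, Polynomial.roots_prod]
    · simp
    · simp [Finset.prod_ne_zero_iff, Polynomial.X_sub_C_ne_zero]
  have := congrArg (fun s => (s.map (f ∘ RCLike.re)).sum) hroots
  simpa [Multiset.map_map, Function.comp_def] using this

theorem IsHermitian.charpoly_kronecker {A : Matrix m m 𝕜} {B : Matrix n n 𝕜} (hA : A.IsHermitian)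
    (hB : B.IsHermitian) :
    (A ⊗ₖ B).charpoly =
      ∏ p : m × n, (X - C ((hA.eigenvalues p.1 * hB.eigenvalues p.2 : ℝ) : 𝕜)) := by
  set U : Matrix m m 𝕜 := (hA.eigenvectorUnitary : Matrix m m 𝕜)
  set V : Matrix n n 𝕜 := (hB.eigenvectorUnitary : Matrix n n 𝕜)
  have hUV : star (U ⊗ₖ V) * (U ⊗ₖ V) = 1 :=
    (Unitary.mem_iff.mp (kronecker_mem_unitary hA.eigenvectorUnitary.2
      hB.eigenvectorUnitary.2)).1
  have hAB : A ⊗ₖ B = (U ⊗ₖ V) *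
      diagonal (fun p => ((hA.eigenvalues p.1 * hB.eigenvalues p.2 : ℝ) : 𝕜)) * star (U ⊗ₖ V) := by
    conv_lhs => rw [hA.spectral_theorem, hB.spectral_theorem]
    rw [star_eq_conjTranspose, conjTranspose_kronecker, ← star_eq_conjTranspose,
      ← star_eq_conjTranspose]
    simp only [Unitary.conjStarAlgAut_apply, mul_kronecker_mul, diagonal_kronecker_diagonal,
      Function.comp_apply, RCLike.ofReal_mul, U, V]
  rw [hAB, charpoly_mul_comm, ← mul_assoc, hUV, one_mul, charpoly_diagonal]

theorem IsHermitian.sum_eigenvalues_eq_one {A : Matrix n n 𝕜} (hA : A.IsHermitian)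
    (htr : A.trace = 1) : ∑ i, hA.eigenvalues i = 1 := by
  have h := hA.trace_eq_sum_eigenvalues
  rw [htr] at h
  exact_mod_cast h.symm

theorem IsHermitian.eigenvalues_eq_pi_single {A : Matrix n n 𝕜} (hA : A.IsHermitian)
    (hrank : A.rank ≤ 1) (htr : A.trace = 1) : ∃ j, hA.eigenvalues = Pi.single j 1 := by
  have hsum := hA.sum_eigenvalues_eq_one htr
  have hsub : Subsingleton {i // hA.eigenvalues i ≠ 0} :=
    Fintype.card_le_one_iff_subsingleton.mp (hA.rank_eq_card_non_zero_eigs ▸ hrank)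
  obtain ⟨j, hj⟩ : ∃ j, hA.eigenvalues j ≠ 0 := by
    by_contra! h
    simp [h] at hsum
  have hzero : ∀ i ≠ j, hA.eigenvalues i = 0 := fun i hi => by
    by_contra h
    exact hi (congrArg Subtype.val
      (Subsingleton.elim (⟨i, h⟩ : {k // hA.eigenvalues k ≠ 0}) ⟨j, hj⟩))
  refine ⟨j, funext fun i => ?_⟩
  rcases eq_or_ne i j with rfl | hi
  · rw [Fintype.sum_eq_single i hzero] at hsum
    simpa using hsum
  · simp [hzero i hi, hi]

end Matrix

section QuantumStatisticalComplexity

variable {m n : Type*} [Fintype m] [DecidableEq m] [Fintype n] [DecidableEq n]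

theorem vNEntropy_eq_of_charpoly_eq {A : Matrix m m ℂ} (hA : A.IsHermitian) {d : m → ℝ}
    (h : A.charpoly = ∏ i, (X - C (d i : ℂ))) :
    vNEntropy A = -∑ i, d i * Real.log (d i) := by
  rw [vNEntropy, dif_pos hA, hA.sum_comp_eigenvalues_of_charpoly_eq h (fun x => x * Real.log x)]

theorem diseq_eq_of_charpoly_eq {A : Matrix m m ℂ} (hA : A.IsHermitian) {d : m → ℝ}
    (h : A.charpoly = ∏ i, (X - C (d i : ℂ))) :
    diseq A = 1 / 2 * ∑ i, |d i - (Fintype.card m : ℝ)⁻¹| := by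
  have hH : (A - mmix m).IsHermitian := hA.sub (by simp [mmix, IsHermitian])
  have hc : (A - mmix m).charpoly = ∏ i, (X - C ((d i - (Fintype.card m : ℝ)⁻¹ : ℝ) : ℂ)) := by
    simp [mmix, charpoly_sub_smul_one_of_charpoly_eq h]
  rw [diseq, traceNorm, dif_pos hH,
    hH.sum_comp_eigenvalues_of_charpoly_eq (d := fun i => d i - (Fintype.card m : ℝ)⁻¹) hc]

theorem vNEntropy_nonneg {ρ : Matrix m m ℂ} (hρ : ρ.PosSemidef) (htr : ρ.trace = 1) :
    0 ≤ vNEntropy ρ := by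
  rw [vNEntropy, dif_pos hρ.1, neg_nonneg]
  refine Finset.sum_nonpos fun i _ => Real.mul_log_nonpos (hρ.eigenvalues_nonneg i) ?_
  rw [← hρ.1.sum_eigenvalues_eq_one htr]
  exact Finset.single_le_sum (fun j _ => hρ.eigenvalues_nonneg j) (Finset.mem_univ i)

theorem vNEntropy_kronecker_of_eigenvalues_eq_pi_single {A : Matrix m m ℂ} {B : Matrix n n ℂ}
    (hA : A.IsHermitian) (hB : B.IsHermitian) {j : n} (hμ : hB.eigenvalues = Pi.single j 1) :
    vNEntropy (A ⊗ₖ B) = vNEntropy A := by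
  rw [vNEntropy_eq_of_charpoly_eq (hA.kronecker_s10 hB)
    (d := fun p => hA.eigenvalues p.1 * hB.eigenvalues p.2) (hA.charpoly_kronecker hB), vNEntropy,
    dif_pos hA, Fintype.sum_prod_type, hμ]
  congr 1
  refine Finset.sum_congr rfl fun i _ => ?_
  rw [Fintype.sum_comp_pi_single (fun x => hA.eigenvalues i * x * Real.log (hA.eigenvalues i * x))]
  simp

theorem diseq_kronecker_le_of_eigenvalues_eq_pi_single [Nonempty m] {A : Matrix m m ℂ}
    {B : Matrix n n ℂ} (hA : A.IsHermitian) (hB : B.IsHermitian) {j : n}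
    (hμ : hB.eigenvalues = Pi.single j 1) :
    diseq (A ⊗ₖ B) ≤ diseq A + ((Fintype.card n : ℝ) - 1) / Fintype.card n := by
  rw [diseq_eq_of_charpoly_eq (hA.kronecker_s10 hB)
      (d := fun p => hA.eigenvalues p.1 * hB.eigenvalues p.2) (hA.charpoly_kronecker hB),
    diseq_eq_of_charpoly_eq hA hA.charpoly_eq, Fintype.sum_prod_type, hμ, Fintype.card_prod,
    Nat.cast_mul]
  set a : ℝ := (Fintype.card m : ℝ) with ha_def
  set b : ℝ := (Fintype.card n : ℝ) with hb_def
  have ha : 0 < a := by positivity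
  have hb : 1 ≤ b := Nat.one_le_cast.mpr (Fintype.card_pos_iff.mpr ⟨j⟩)
  have hc : 0 < (a * b)⁻¹ := inv_pos.mpr (mul_pos ha (by linarith))
  have hinner : ∀ i, ∑ k, |hA.eigenvalues i * (Pi.single j 1 : n → ℝ) k - (a * b)⁻¹| =
      |hA.eigenvalues i - (a * b)⁻¹| + (b - 1) * (a * b)⁻¹ := fun i => by
    rw [Fintype.sum_comp_pi_single (fun x => |hA.eigenvalues i * x - (a * b)⁻¹|), ← hb_def,
      mul_one, mul_zero, zero_sub, abs_neg, abs_of_pos hc]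
  have hshift : ∀ x : ℝ, |x - (a * b)⁻¹| ≤ |x - a⁻¹| + (a⁻¹ - (a * b)⁻¹) := fun x => by
    have h := abs_sub_le x a⁻¹ (a * b)⁻¹
    rwa [abs_of_nonneg (sub_nonneg.mpr (inv_anti₀ ha (le_mul_of_one_le_right ha.le hb)))] at h
  calc 1 / 2 * ∑ i, ∑ k, |hA.eigenvalues i * (Pi.single j 1 : n → ℝ) k - (a * b)⁻¹|
      ≤ 1 / 2 * ∑ i, (|hA.eigenvalues i - a⁻¹| + (a⁻¹ - (a * b)⁻¹ + (b - 1) * (a * b)⁻¹)) := by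
        simp only [hinner, ← add_assoc]
        gcongr with i
        exact hshift _
    _ = 1 / 2 * ∑ i, |hA.eigenvalues i - a⁻¹| + (b - 1) / b := by
        rw [Finset.sum_add_distrib, Finset.sum_const, Finset.card_univ, nsmul_eq_mul, ← ha_def]
        generalize ∑ i, |hA.eigenvalues i - a⁻¹| = S
        field_simp
        ring

end QuantumStatisticalComplexity

/-- extension by a pure state. -/
theorem qscm_extension_pure {N : ℕ} (hN : 2 ≤ N)
    (ρ : Matrix (Fin N) (Fin N) ℂ) (hρ : ρ.PosSemidef) (htr : ρ.trace = 1)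
    (ψ : Fin N → ℂ) (hψ : star ψ ⬝ᵥ ψ = 1) :
    qscm (ρ ⊗ₖ Matrix.vecMulVec ψ (star ψ)) ≤
      vNEntropy ρ / (2 * Real.log N) * (diseq ρ + ((N : ℝ) - 1) / N) := by
  have : Nonempty (Fin N) := ⟨⟨0, by omega⟩⟩
  have hP : (vecMulVec ψ (star ψ)).IsHermitian := (posSemidef_vecMulVec_self_star ψ).isHermitian
  obtain ⟨j, hμ⟩ := hP.eigenvalues_eq_pi_single (rank_vecMulVec_le _ _)
    (by rw [trace_vecMulVec, dotProduct_comm, hψ])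
  have hD := diseq_kronecker_le_of_eigenvalues_eq_pi_single hρ.1 hP hμ
  rw [Fintype.card_fin] at hD
  rw [qscm, vNEntropy_kronecker_of_eigenvalues_eq_pi_single hρ.1 hP hμ, Fintype.card_prod,
    Fintype.card_fin, Nat.cast_mul, Real.log_mul (by positivity) (by positivity), ← two_mul,
    mul_div_right_comm]
  exact mul_le_mul_of_nonneg_left hD (div_nonneg (vNEntropy_nonneg hρ htr) (by positivity))
end

section
/- Closed expression for the one-qubit quantum statistical complexity: for a one-qubit density matrix ρ = (1/2)(I + x·σˣ + y·σʸ + z·σᶻ) with Bloch vector length r = √(x² + y² + z²) satisfying 0 ≤ r < 1, the product of the von Neumann entropy and the disequilibrium equals S(ρ)·D(ρ, I/2) = −(r²/2)·arctanh(r) − (r/4)·log((1 − r²)/4) (natural logarithm); equivalently, the quantum statistical complexity is C(ρ) = [−(r²/2)·arctanh(r) − (r/4)·log((1 − r²)/4)] / log 2, a function of r alone. -/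
open Matrix BigOperators Kronecker ComplexOrder

/-- The inverse hyperbolic tangent. -/
noncomputable def arctanh (x : ℝ) : ℝ := (1/2) * Real.log ((1 + x) / (1 - x))

noncomputable def pauliX : Matrix (Fin 2) (Fin 2) ℂ := !![0, 1; 1, 0]
noncomputable def pauliY : Matrix (Fin 2) (Fin 2) ℂ := !![0, -Complex.I; Complex.I, 0]
noncomputable def pauliZ : Matrix (Fin 2) (Fin 2) ℂ := !![1, 0; 0, -1]

noncomputable def blochState (x y z : ℝ) : Matrix (Fin 2) (Fin 2) ℂ :=
  (1/2 : ℂ) • ((1 : Matrix (Fin 2) (Fin 2) ℂ) + (x : ℂ) • pauliX + (y : ℂ) • pauliY + (z : ℂ) • pauliZ)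

/-! Both factors depend only on spectra, and the spectrum of a Hermitian `2 × 2` matrix is fixed by
its trace and determinant: `ρ` has eigenvalues `(1 ± r) / 2` and `ρ - I / 2` has `± r / 2`. Hence
`S(ρ)` is the binary entropy of `(1 + r) / 2`, `D(ρ, I/2) = r / 2`, and the closed form is the identity
`binEntropy ((1 + r) / 2) = -r artanh r - (1/2) log ((1 - r²) / 4)`. -/

open Real

namespace Matrix.IsHermitian

variable {A : Matrix (Fin 2) (Fin 2) ℂ} (hA : A.IsHermitian) {a b : ℝ}
  (htr : A.trace = a + b) (hdet : A.det = a * b)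
include hA htr hdet

theorem eigenvalues_fin_two :
    (hA.eigenvalues 0 = a ∧ hA.eigenvalues 1 = b) ∨ (hA.eigenvalues 0 = b ∧ hA.eigenvalues 1 = a) := by
  have hsum : hA.eigenvalues 0 + hA.eigenvalues 1 = a + b := by
    have := hA.trace_eq_sum_eigenvalues.symm.trans htr
    rw [Fin.sum_univ_two] at this
    exact Complex.ofReal_injective (by simpa using this)
  have hprod : hA.eigenvalues 0 * hA.eigenvalues 1 = a * b := by
    have := hA.det_eq_prod_eigenvalues.symm.trans hdet
    rw [Fin.prod_univ_two] at this
    exact Complex.ofReal_injective (by simpa using this)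
  have hroot : (hA.eigenvalues 0 - a) * (hA.eigenvalues 0 - b) = 0 := by
    linear_combination hA.eigenvalues 0 * hsum - hprod
  rcases mul_eq_zero.mp hroot with h | h
  · exact .inl ⟨by linarith, by linarith⟩
  · exact .inr ⟨by linarith, by linarith⟩

theorem vNEntropy_fin_two : vNEntropy A = negMulLog a + negMulLog b := by
  simp only [vNEntropy, dif_pos hA, Fin.sum_univ_two, negMulLog]
  rcases hA.eigenvalues_fin_two htr hdet with ⟨h0, h1⟩ | ⟨h0, h1⟩ <;> rw [h0, h1] <;> ring

theorem traceNorm_fin_two : traceNorm A = |a| + |b| := by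
  rw [traceNorm, dif_pos hA, Fin.sum_univ_two]
  rcases hA.eigenvalues_fin_two htr hdet with ⟨h0, h1⟩ | ⟨h0, h1⟩ <;> rw [h0, h1]
  exact add_comm _ _

end Matrix.IsHermitian

theorem binEntropy_one_add_div_two {r : ℝ} (h0 : -1 < r) (h1 : r < 1) :
    binEntropy ((1 + r) / 2) = -r * arctanh r - (1 / 2) * log ((1 - r ^ 2) / 4) := by
  have hp : 0 < (1 + r) / 2 := by linarith
  have hq : 0 < (1 - r) / 2 := by linarith
  have hlog_prod : log ((1 - r ^ 2) / 4) = log ((1 + r) / 2) + log ((1 - r) / 2) := by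
    rw [← log_mul hp.ne' hq.ne']; ring_nf
  have harctanh : arctanh r = (1 / 2) * (log ((1 + r) / 2) - log ((1 - r) / 2)) := by
    rw [arctanh, ← log_div hp.ne' hq.ne']; congr 2; field_simp
  rw [binEntropy_eq_negMulLog_add_negMulLog_one_sub, hlog_prod, harctanh, negMulLog, negMulLog,
    show 1 - (1 + r) / 2 = (1 - r) / 2 by ring]
  ring

theorem blochState_eq (x y z : ℝ) : blochState x y z =
    !![(1 + z : ℂ) / 2, (x - y * Complex.I) / 2; (x + y * Complex.I) / 2, (1 - z) / 2] := by
  ext i j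
  fin_cases i <;> fin_cases j <;> simp [blochState, pauliX, pauliY, pauliZ, one_apply] <;> ring

theorem blochState_sub_mmix_eq (x y z : ℝ) : blochState x y z - mmix (Fin 2) =
    !![(z : ℂ) / 2, (x - y * Complex.I) / 2; (x + y * Complex.I) / 2, -z / 2] := by
  ext i j
  fin_cases i <;> fin_cases j <;> simp [blochState_eq, mmix, one_apply] <;> ring

theorem isHermitian_blochState (x y z : ℝ) : (blochState x y z).IsHermitian := by
  ext i j
  fin_cases i <;> fin_cases j <;> simp [blochState_eq, Complex.ext_iff]

theorem isHermitian_blochState_sub_mmix (x y z : ℝ) :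
    (blochState x y z - mmix (Fin 2)).IsHermitian := by
  rw [blochState_sub_mmix_eq]
  ext i j
  fin_cases i <;> fin_cases j <;> simp [Complex.ext_iff]

theorem trace_blochState (x y z : ℝ) : (blochState x y z).trace = 1 := by
  rw [blochState_eq, trace_fin_two_of]; ring

theorem det_blochState (x y z : ℝ) :
    (blochState x y z).det = ((1 - (x ^ 2 + y ^ 2 + z ^ 2) : ℝ) : ℂ) / 4 := by
  rw [blochState_eq, det_fin_two_of]; push_cast
  linear_combination ((y : ℂ) ^ 2 / 4) * Complex.I_sq

theorem trace_blochState_sub_mmix (x y z : ℝ) : (blochState x y z - mmix (Fin 2)).trace = 0 := by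
  rw [blochState_sub_mmix_eq, trace_fin_two_of]; ring

theorem det_blochState_sub_mmix (x y z : ℝ) :
    (blochState x y z - mmix (Fin 2)).det = -((x ^ 2 + y ^ 2 + z ^ 2 : ℝ) : ℂ) / 4 := by
  rw [blochState_sub_mmix_eq, det_fin_two_of]; push_cast
  linear_combination ((y : ℂ) ^ 2 / 4) * Complex.I_sq

theorem vNEntropy_blochState (x y z : ℝ) :
    vNEntropy (blochState x y z) = binEntropy ((1 + √(x ^ 2 + y ^ 2 + z ^ 2)) / 2) := by
  have hsq := sq_sqrt (by positivity : 0 ≤ x ^ 2 + y ^ 2 + z ^ 2)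
  set r := √(x ^ 2 + y ^ 2 + z ^ 2)
  rw [(isHermitian_blochState x y z).vNEntropy_fin_two (a := (1 + r) / 2) (b := (1 - r) / 2),
    binEntropy_eq_negMulLog_add_negMulLog_one_sub, show 1 - (1 + r) / 2 = (1 - r) / 2 by ring]
  · rw [trace_blochState]; push_cast; ring
  · rw [det_blochState, ← hsq]; push_cast; ring

theorem diseq_blochState (x y z : ℝ) :
    diseq (blochState x y z) = √(x ^ 2 + y ^ 2 + z ^ 2) / 2 := by
  have hsq := sq_sqrt (by positivity : 0 ≤ x ^ 2 + y ^ 2 + z ^ 2)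
  set r := √(x ^ 2 + y ^ 2 + z ^ 2)
  rw [diseq, (isHermitian_blochState_sub_mmix x y z).traceNorm_fin_two (a := r / 2) (b := -(r / 2)),
    abs_neg, abs_of_nonneg (by positivity)]
  · ring
  · rw [trace_blochState_sub_mmix]; push_cast; ring
  · rw [det_blochState_sub_mmix, ← hsq]; push_cast; ring

/-- closed expression for the one-qubit quantum statistical complexity. -/
theorem qscm_one_qubit (x y z r : ℝ) (hr : r = Real.sqrt (x^2 + y^2 + z^2)) (h1 : r < 1) :
    vNEntropy (blochState x y z) * diseq (blochState x y z) =
      -(r^2/2) * arctanh r - (r/4) * Real.log ((1 - r^2)/4) ∧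
    qscm (blochState x y z) =
      (-(r^2/2) * arctanh r - (r/4) * Real.log ((1 - r^2)/4)) / Real.log 2 := by
  have h0 : -1 < r := by linarith [hr ▸ sqrt_nonneg (x ^ 2 + y ^ 2 + z ^ 2)]
  have hSD : vNEntropy (blochState x y z) * diseq (blochState x y z) =
      -(r^2/2) * arctanh r - (r/4) * Real.log ((1 - r^2)/4) := by
    rw [vNEntropy_blochState, diseq_blochState, ← hr, binEntropy_one_add_div_two h0 h1]
    ring
  refine ⟨hSD, ?_⟩
  rw [qscm, hSD]
  norm_num
end
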